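/- arXiv:1210.3681 — 4 statements merged into one kernel-verified Lean document; each statement's English description precedes it below -/
import Mathlib

section
/- Let A be a group and B a normal subgroup of A. If both B and A/B satisfy the Tits alternative, then A satisfies the Tits alternative. -/
/-- A group is virtually solvable if it has a solvable subgroup of finite index. -/
def VirtuallySolvable (G : Type*) [Group G] : Prop :=
  ∃ H : Subgroup G, H.FiniteIndex ∧ IsSolvable H

/-- A group satisfies the Tits alternative if every subgroup either contains a
free non-abelian subgroup (a copy of the free group on two generators) or is
virtually solvable. -/
def SatisfiesTitsAlternative (G : Type*) [Group G] : Prop :=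
  ∀ H : Subgroup G,
    (∃ F : Subgroup H, Nonempty (F ≃* FreeGroup (Fin 2))) ∨ VirtuallySolvable H


/-!
Given `H ≤ A`, map `H` to `A ⧸ B`. A free subgroup of the image lifts to `H`, and a free
subgroup of `H ⊓ B` already lies in `H`; otherwise both are virtually solvable, and it remains to
see that virtually solvable groups are closed under extensions. Pulling back a solvable subgroup
of finite index of the quotient reduces this to `N ⊴ G` with `N` virtually solvable and `G ⧸ N`
solvable. The solvable radical `R` of `N` (the join of its normal solvable subgroups) is then
solvable of finite index in `N` and characteristic, hence normal in `G`. So `N ⧸ R` is a finite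
normal subgroup of `G ⧸ R`, whose centralizer has finite index and is abelian-by-solvable.
-/

section

variable {G X : Type*} [Group G] [Group X]

theorem Group.isSolvable_of_ker_of_range (f : G →* X) (hker : Group.IsSolvable f.ker)
    (hrange : Group.IsSolvable f.range) : Group.IsSolvable G :=
  Group.isSolvable_of_ker_le_range f.ker.subtype f.rangeRestrict
    (by rw [MonoidHom.ker_rangeRestrict, Subgroup.range_subtype])

theorem Subgroup.isSolvable_of_le {H K : Subgroup G} (hle : H ≤ K) (hK : Group.IsSolvable K) :
    Group.IsSolvable H :=
  Group.isSolvable_of_isSolvable_injective (Subgroup.inclusion_injective hle)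

theorem Subgroup.isSolvable_map (f : G →* X) {H : Subgroup G} (hH : Group.IsSolvable H) :
    Group.IsSolvable (H.map f) :=
  Group.isSolvable_of_surjective (f.subgroupMap_surjective H)

theorem MonoidHom.subgroupComap_injective {f : G →* X} (hf : Function.Injective f)
    (K : Subgroup X) : Function.Injective (f.subgroupComap K) :=
  fun _ _ h => Subtype.ext (hf (congrArg Subtype.val h))

theorem Subgroup.isSolvable_comap {f : G →* X} (hf : Function.Injective f) {K : Subgroup X}
    (hK : Group.IsSolvable K) : Group.IsSolvable (K.comap f) :=
  Group.isSolvable_of_isSolvable_injective (f.subgroupComap_injective hf K)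

theorem Subgroup.isSolvable_sup_of_normal {M N : Subgroup G} [N.Normal]
    (hM : Group.IsSolvable M) (hN : Group.IsSolvable N) : Group.IsSolvable ↥(M ⊔ N) := by
  let g := (QuotientGroup.mk' N).comp (M ⊔ N).subtype
  refine Group.isSolvable_of_ker_of_range g ?_ ?_
  · rw [← MonoidHom.comap_ker, QuotientGroup.ker_mk']
    exact isSolvable_comap (M ⊔ N).subtype_injective hN
  · rw [MonoidHom.range_comp, Subgroup.range_subtype, Subgroup.map_sup,
      QuotientGroup.map_mk'_self, sup_bot_eq]
    exact isSolvable_map _ hM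

theorem MulAut.conjNormal_mem_ker_iff {N : Subgroup G} [N.Normal] {g : G} :
    g ∈ (MulAut.conjNormal : G →* MulAut N).ker ↔ ∀ n ∈ N, Commute g n := by
  rw [MonoidHom.mem_ker]
  constructor
  · intro h n hn
    have hconj : g * n * g⁻¹ = n := by
      simpa [MulAut.conjNormal_apply] using congrArg (fun φ : MulAut N => (φ ⟨n, hn⟩ : G)) h
    exact mul_inv_eq_iff_eq_mul.mp hconj
  · intro h
    ext ⟨n, hn⟩
    simp [MulAut.conjNormal_apply, (h n hn).eq]

theorem Subgroup.finite_map_mk' (K R : Subgroup G) [R.Normal] [(R.subgroupOf K).FiniteIndex] :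
    Finite (K.map (QuotientGroup.mk' R)) := by
  let q := (QuotientGroup.mk' R).comp K.subtype
  have hker : q.ker = R.subgroupOf K := by
    rw [← MonoidHom.comap_ker, QuotientGroup.ker_mk', Subgroup.subgroupOf]
  have hrange : q.range = K.map (QuotientGroup.mk' R) := by
    rw [MonoidHom.range_comp, Subgroup.range_subtype]
  have : Finite (K ⧸ q.ker) := by rw [hker]; infer_instance
  exact hrange ▸ Finite.of_equiv _ (QuotientGroup.quotientKerEquivRange q).toEquiv

end

section SolvableRadical

variable {G : Type*} [Group G]

def solvableRadical (G : Type*) [Group G] : Subgroup G :=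
  sSup {N : Subgroup G | N.Normal ∧ Group.IsSolvable N}

theorem supClosed_normal_isSolvable :
    SupClosed {N : Subgroup G | N.Normal ∧ Group.IsSolvable N} :=
  fun _ ⟨_, hM⟩ _ ⟨_, hN⟩ =>
    ⟨Subgroup.sup_normal _ _, Subgroup.isSolvable_sup_of_normal hM hN⟩

theorem le_solvableRadical {N : Subgroup G} [hn : N.Normal] (hs : Group.IsSolvable N) :
    N ≤ solvableRadical G :=
  le_sSup ⟨hn, hs⟩

instance solvableRadical_characteristic : (solvableRadical G).Characteristic := by
  refine Subgroup.characteristic_iff_map_le.mpr fun φ => ?_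
  refine Subgroup.map_le_iff_le_comap.mpr (sSup_le fun N ⟨hn, hs⟩ => ?_)
  exact Subgroup.map_le_iff_le_comap.mp
    (le_solvableRadical (hn := hn.map _ φ.surjective) (Subgroup.isSolvable_map _ hs))

theorem Subgroup.finite_Ici_of_finiteIndex (S : Subgroup G) [S.Normal] [S.FiniteIndex] :
    (Set.Ici S).Finite := by
  have : Finite (Subgroup (G ⧸ S)) :=
    Finite.of_injective (fun K => (K : Set (G ⧸ S))) SetLike.coe_injective
  refine (Set.finite_range fun K : Subgroup (G ⧸ S) => K.comap (QuotientGroup.mk' S)).subset ?_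
  intro M (hM : S ≤ M)
  exact ⟨M.map (QuotientGroup.mk' S),
    (QuotientGroup.comap_map_mk' S M).trans (sup_eq_right.mpr hM)⟩

/-- Every normal solvable subgroup lies below one containing `S`, and those containing `S` form a
finite sup-closed family, so their join is one of them. -/
theorem isSolvable_solvableRadical {S : Subgroup G} [S.Normal] [S.FiniteIndex]
    (hS : Group.IsSolvable S) : Group.IsSolvable (solvableRadical G) := by
  set 𝒮 := {N : Subgroup G | N.Normal ∧ Group.IsSolvable N}
  have hsup : sSup 𝒮 = sSup (𝒮 ∩ Set.Ici S) :=
    le_antisymm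
      (sSup_le fun N hN => le_sup_left.trans
        (le_sSup ⟨supClosed_normal_isSolvable hN ⟨inferInstance, hS⟩,
          Set.mem_Ici.mpr le_sup_right⟩))
      (sSup_le_sSup Set.inter_subset_left)
  have hmem : sSup (𝒮 ∩ Set.Ici S) ∈ 𝒮 := supClosed_normal_isSolvable.sSup_mem_of_nonempty
    ((Subgroup.finite_Ici_of_finiteIndex S).subset Set.inter_subset_right)
    ⟨S, ⟨inferInstance, hS⟩, Set.mem_Ici.mpr le_rfl⟩ Set.inter_subset_left
  exact (hsup ▸ hmem : sSup 𝒮 ∈ 𝒮).2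

theorem virtuallySolvable_iff_solvableRadical :
    VirtuallySolvable G ↔
      Group.IsSolvable (solvableRadical G) ∧ (solvableRadical G).FiniteIndex := by
  refine ⟨fun ⟨H, hH, hs⟩ => ?_, fun ⟨hs, hH⟩ => ⟨_, hH, hs⟩⟩
  have hcore : Group.IsSolvable H.normalCore := Subgroup.isSolvable_of_le H.normalCore_le hs
  exact ⟨isSolvable_solvableRadical hcore,
    Subgroup.finiteIndex_of_le (le_solvableRadical hcore)⟩

end SolvableRadical

namespace VirtuallySolvable

variable {G X : Type*} [Group G] [Group X]

theorem of_injective (f : G →* X) (hf : Function.Injective f) (h : VirtuallySolvable X) :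
    VirtuallySolvable G := by
  obtain ⟨H, hH, hs⟩ := h
  exact ⟨H.comap f, ⟨by
    have : H.IsFiniteRelIndex f.range := Subgroup.isFiniteRelIndex_of_finiteIndex
    rw [H.index_comap]
    exact Subgroup.relIndex_ne_zero⟩,
    Subgroup.isSolvable_comap hf hs⟩

theorem of_finiteIndex (P : Subgroup G) [hP : P.FiniteIndex] (h : VirtuallySolvable P) :
    VirtuallySolvable G := by
  obtain ⟨H, hH, hs⟩ := h
  exact ⟨H.map P.subtype, ⟨by
    rw [Subgroup.index_map_subtype H]
    exact mul_ne_zero hH.index_ne_zero hP.index_ne_zero⟩,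
    Subgroup.isSolvable_map _ hs⟩

theorem exists_finiteIndex_isSolvable_map (f : G →* X) (hf : Function.Surjective f)
    (h : VirtuallySolvable X) :
    ∃ P : Subgroup G, P.FiniteIndex ∧ Group.IsSolvable (P.map f) := by
  obtain ⟨T, hT, hs⟩ := h
  exact ⟨T.comap f, ⟨by rw [T.index_comap_of_surjective hf]; exact hT.index_ne_zero⟩,
    Subgroup.isSolvable_of_le (Subgroup.map_comap_le f T) hs⟩

theorem of_isSolvable_ker (f : G →* X) (hf : Function.Surjective f)
    (hker : Group.IsSolvable f.ker) (hX : VirtuallySolvable X) : VirtuallySolvable G := by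
  obtain ⟨P, hP, hs⟩ := exists_finiteIndex_isSolvable_map f hf hX
  refine ⟨P, hP, Group.isSolvable_of_ker_of_range (f.comp P.subtype) ?_ ?_⟩
  · exact Subgroup.isSolvable_comap P.subtype_injective hker
  · rwa [MonoidHom.range_comp, Subgroup.range_subtype]

/-- The kernel of the conjugation action on the finite group `f.ker` has finite index, and it meets
`f.ker` in central elements. -/
theorem of_finite_ker (f : G →* X) [Finite f.ker] (hrange : Group.IsSolvable f.range) :
    VirtuallySolvable G := by
  let C := (MulAut.conjNormal : G →* MulAut f.ker).ker
  refine ⟨C, inferInstance, Group.isSolvable_of_ker_of_range (f.comp C.subtype) ?_ ?_⟩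
  · refine Group.isSolvable_of_comm fun ⟨⟨a, haC⟩, ha⟩ ⟨⟨b, hbC⟩, _⟩ => ?_
    have hcomm : Commute b a := MulAut.conjNormal_mem_ker_iff.mp hbC a ha
    exact Subtype.ext (Subtype.ext hcomm.eq.symm)
  · rw [MonoidHom.range_comp, Subgroup.range_subtype]
    exact Subgroup.isSolvable_of_le (Subgroup.map_le_range f C) hrange

theorem of_isSolvable_range (f : G →* X) (hker : VirtuallySolvable f.ker)
    (hrange : Group.IsSolvable f.range) : VirtuallySolvable G := by
  obtain ⟨hRs, hRfi⟩ := virtuallySolvable_iff_solvableRadical.mp hker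
  let R := (solvableRadical f.ker).map f.ker.subtype
  have hRf : R ≤ f.ker := Subgroup.map_subtype_le _
  let f' := QuotientGroup.lift R f hRf
  have : (R.subgroupOf f.ker).FiniteIndex := by
    rwa [Subgroup.subgroupOf, Subgroup.comap_map_eq_self_of_injective f.ker.subtype_injective]
  have : Finite f'.ker := by
    rw [QuotientGroup.ker_lift]
    exact Subgroup.finite_map_mk' f.ker R
  refine of_isSolvable_ker (QuotientGroup.mk' R) (QuotientGroup.mk'_surjective R) ?_ ?_
  · rw [QuotientGroup.ker_mk']
    exact Subgroup.isSolvable_map _ hRs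
  · refine of_finite_ker f' (Subgroup.isSolvable_of_le ?_ hrange)
    rintro _ ⟨x, rfl⟩
    induction x using QuotientGroup.induction_on with | H x => exact ⟨x, rfl⟩

theorem of_ker (f : G →* X) (hf : Function.Surjective f) (hker : VirtuallySolvable f.ker)
    (hX : VirtuallySolvable X) : VirtuallySolvable G := by
  obtain ⟨P, hP, hs⟩ := exists_finiteIndex_isSolvable_map f hf hX
  refine of_finiteIndex P (of_isSolvable_range (f.comp P.subtype) ?_ ?_)
  · exact hker.of_injective (P.subtype.subgroupComap f.ker)
      (P.subtype.subgroupComap_injective P.subtype_injective f.ker)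
  · rwa [MonoidHom.range_comp, Subgroup.range_subtype]

end VirtuallySolvable

def ContainsFreeGroup (G : Type*) [Group G] : Prop :=
  ∃ φ : FreeGroup (Fin 2) →* G, Function.Injective φ

namespace ContainsFreeGroup

variable {G X : Type*} [Group G] [Group X]

theorem iff_exists_subgroup :
    ContainsFreeGroup G ↔ ∃ F : Subgroup G, Nonempty (F ≃* FreeGroup (Fin 2)) :=
  ⟨fun ⟨φ, hφ⟩ => ⟨φ.range, ⟨(MonoidHom.ofInjective hφ).symm⟩⟩,
    fun ⟨F, ⟨e⟩⟩ =>
      ⟨F.subtype.comp e.symm.toMonoidHom, F.subtype_injective.comp e.symm.injective⟩⟩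

theorem of_injective (f : G →* X) (hf : Function.Injective f) (h : ContainsFreeGroup G) :
    ContainsFreeGroup X :=
  let ⟨φ, hφ⟩ := h
  ⟨f.comp φ, hf.comp hφ⟩

/-- Free groups are projective: the generators lift along `f`. -/
theorem of_surjective (f : G →* X) (hf : Function.Surjective f) (h : ContainsFreeGroup X) :
    ContainsFreeGroup G := by
  obtain ⟨φ, hφ⟩ := h
  choose x hx using fun i => hf (φ (FreeGroup.of i))
  have hlift : f.comp (FreeGroup.lift x) = φ := FreeGroup.ext_hom _ _ fun i => by simp [hx]
  rw [← hlift, MonoidHom.coe_comp] at hφ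
  exact ⟨FreeGroup.lift x, hφ.of_comp⟩

end ContainsFreeGroup

section TitsAlternative

variable {G X : Type*} [Group G] [Group X]

theorem satisfiesTitsAlternative_iff :
    SatisfiesTitsAlternative G ↔
      ∀ H : Subgroup G, ContainsFreeGroup H ∨ VirtuallySolvable H := by
  simp only [SatisfiesTitsAlternative, ContainsFreeGroup.iff_exists_subgroup]

theorem SatisfiesTitsAlternative.containsFreeGroup_or_virtuallySolvable_of_injective
    (h : SatisfiesTitsAlternative X) (f : G →* X) (hf : Function.Injective f) :
    ContainsFreeGroup G ∨ VirtuallySolvable G := by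
  let e := MonoidHom.ofInjective hf
  refine (satisfiesTitsAlternative_iff.mp h f.range).imp (fun hfree => ?_) (fun hvs => ?_)
  · exact hfree.of_injective e.symm.toMonoidHom e.symm.injective
  · exact hvs.of_injective e.toMonoidHom e.injective

theorem containsFreeGroup_or_virtuallySolvable_of_ker (f : G →* X) (hf : Function.Surjective f)
    (hker : ContainsFreeGroup f.ker ∨ VirtuallySolvable f.ker)
    (hX : ContainsFreeGroup X ∨ VirtuallySolvable X) :
    ContainsFreeGroup G ∨ VirtuallySolvable G := by
  rcases hX with hfree | hX
  · exact .inl (hfree.of_surjective f hf)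
  rcases hker with hfree | hker
  · exact .inl (hfree.of_injective f.ker.subtype f.ker.subtype_injective)
  · exact .inr (hker.of_ker f hf hX)

theorem SatisfiesTitsAlternative.of_ker (f : G →* X) (hker : SatisfiesTitsAlternative f.ker)
    (hX : SatisfiesTitsAlternative X) : SatisfiesTitsAlternative G := by
  refine satisfiesTitsAlternative_iff.mpr fun H => ?_
  let g := f.comp H.subtype
  refine containsFreeGroup_or_virtuallySolvable_of_ker g.rangeRestrict g.rangeRestrict_surjective
    ?_ (hX.containsFreeGroup_or_virtuallySolvable_of_injective g.range.subtype
      g.range.subtype_injective)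
  rw [MonoidHom.ker_rangeRestrict]
  exact hker.containsFreeGroup_or_virtuallySolvable_of_injective (H.subtype.subgroupComap f.ker)
    (H.subtype.subgroupComap_injective H.subtype_injective f.ker)

end TitsAlternative

theorem titsAlternative_of_normal_of_quotient {A : Type*} [Group A]
    (B : Subgroup A) [B.Normal]
    (hB : SatisfiesTitsAlternative B) (hQ : SatisfiesTitsAlternative (A ⧸ B)) :
    SatisfiesTitsAlternative A :=
  SatisfiesTitsAlternative.of_ker (QuotientGroup.mk' B) (by rwa [QuotientGroup.ker_mk']) hQ
end

section
/- Let Q be a real quadratic form on a finite-dimensional real vector space V, and let P ⊂ V be a hyperplane on which Q is positive semidefinite. Let H ⊂ V be a 2-dimensional subspace on which Q is negative semidefinite, spanned by vectors α and β. Then Q(α,β)² ≥ Q(α,α)·Q(β,β), where Q(·,·) denotes the associated symmetric bilinear form. -/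
theorem cauchy_schwarz_from_semidefinite_hyperplane
    {V : Type*} [AddCommGroup V] [Module ℝ V] [FiniteDimensional ℝ V]
    (Q : LinearMap.BilinForm ℝ V) (hQsymm : ∀ u v : V, Q u v = Q v u)
    (P : Submodule ℝ V) (hP : IsCoatom P)
    (hpos : ∀ v ∈ P, 0 ≤ Q v v)
    (α β : V)
    (hdim : Module.finrank ℝ (Submodule.span ℝ ({α, β} : Set V)) = 2)
    (hneg : ∀ v ∈ Submodule.span ℝ ({α, β} : Set V), Q v v ≤ 0) :
    Q α α * Q β β ≤ (Q α β) ^ 2 := by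
  set H := Submodule.span ℝ ({α, β} : Set V) with hH
  have hαH : α ∈ H := Submodule.subset_span (by simp)
  have hβH : β ∈ H := Submodule.subset_span (by simp)
  -- linear independence of α, β
  have hrange : Set.range ![α, β] = ({α, β} : Set V) := by
    ext x
    simp [Matrix.range_cons, Matrix.range_empty]
    tauto
  have hli : LinearIndependent ℝ ![α, β] := by
    rw [linearIndependent_iff_card_eq_finrank_span, hrange]
    simpa [Set.finrank] using hdim.symm
  have hli' : ∀ s t : ℝ, s • α + t • β = 0 → s = 0 ∧ t = 0 :=
    fun s t h => LinearIndependent.pair_iff.mp hli s t h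
  -- find nonzero w ∈ H ⊓ P
  obtain ⟨a, b, hw0, hwP⟩ : ∃ a b : ℝ, ¬(a = 0 ∧ b = 0) ∧ a • α + b • β ∈ P := by
    by_cases hα : α ∈ P
    · exact ⟨1, 0, by simp, by simpa using hα⟩
    · have htop : P ⊔ Submodule.span ℝ {α} = ⊤ := by
        apply hP.2
        rcases lt_or_eq_of_le (le_sup_left : P ≤ P ⊔ Submodule.span ℝ {α}) with h | h
        · exact h
        · exact absurd (h ▸ le_sup_right (a := P) : Submodule.span ℝ {α} ≤ P)
            (fun hs => hα (hs (Submodule.mem_span_singleton_self α)))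
      have hβmem : β ∈ P ⊔ Submodule.span ℝ {α} := htop ▸ Submodule.mem_top
      rw [Submodule.mem_sup] at hβmem
      obtain ⟨p, hp, z, hz, hpz⟩ := hβmem
      obtain ⟨c, rfl⟩ := Submodule.mem_span_singleton.mp hz
      refine ⟨-c, 1, by simp, ?_⟩
      have : (-c) • α + (1 : ℝ) • β = p := by
        rw [one_smul, ← hpz, neg_smul]; abel
      rw [this]; exact hp
  set w : V := a • α + b • β with hwdef
  have hwH : w ∈ H := Submodule.add_mem _ (Submodule.smul_mem _ _ hαH)
    (Submodule.smul_mem _ _ hβH)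
  have hQw : Q w w = 0 := le_antisymm (hneg w hwH) (hpos w hwP)
  -- Q w v = 0 for v ∈ H
  have key : ∀ v ∈ H, Q w v = 0 := by
    intro v hv
    have hquad : ∀ t : ℝ, t ^ 2 * Q v v + 2 * t * Q w v ≤ 0 := by
      intro t
      have := hneg (w + t • v) (Submodule.add_mem _ hwH (Submodule.smul_mem _ _ hv))
      simp only [map_add, map_smul, LinearMap.add_apply, LinearMap.smul_apply,
        smul_eq_mul] at this
      have hsym : Q v w = Q w v := hQsymm v w
      rw [hQw, hsym] at this
      nlinarith [this]
    have hAle : Q v v ≤ 0 := hneg v hv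
    by_contra hne
    have h1A : (0 : ℝ) < 1 - Q v v := by linarith
    set t : ℝ := Q w v / (1 - Q v v) with ht
    have htB : t * (1 - Q v v) = Q w v := div_mul_cancel₀ _ (ne_of_gt h1A)
    have ht0 : t ≠ 0 := fun h => hne (by rw [← htB, h, zero_mul])
    have hq := hquad t
    rw [← htB] at hq
    have ht2 : 0 < t ^ 2 := by
      rcases ht0.lt_or_gt with h | h <;> nlinarith
    nlinarith [hq, ht2, hAle, mul_pos ht2 h1A]
  have h1 : a * Q α α + b * Q β α = 0 := by
    have := key α hαH
    simpa [hwdef, map_add, map_smul] using this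
  have h2 : a * Q α β + b * Q β β = 0 := by
    have := key β hβH
    simpa [hwdef, map_add, map_smul] using this
  have hsym : Q β α = Q α β := hQsymm β α
  by_cases ha : a = 0
  · have hb : b ≠ 0 := fun hb => hw0 ⟨ha, hb⟩
    rw [ha] at h1 h2
    simp at h1 h2
    have hβα : Q β α = 0 := by
      rcases h1 with h | h
      · exact absurd h hb
      · exact h
    have hββ : Q β β = 0 := by
      rcases h2 with h | h
      · exact absurd h hb
      · exact h
    rw [hββ]
    nlinarith [sq_nonneg (Q α β)]
  · have h3 : a * (Q α α * Q β β - Q α β ^ 2) = 0 := by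
      linear_combination Q β β * h1 - Q α β * h2 - b * Q β β * hsym
    rcases mul_eq_zero.mp h3 with h | h
    · exact absurd h ha
    · linarith
end

section
/- Let b be a positive integer. There exists a real number A > 1, depending only on b, such that for every monic polynomial P of degree b with integer coefficients, if P has a root of modulus strictly greater than 1, then P has a root of modulus at least A. -/
/-! If every root of a monic integer polynomial of degree `b` has modulus at most `2`, its
coefficients are bounded by `3 ^ b`, so only finitely many such polynomials, hence finitely many
root moduli, occur. Take `A` to be the least of these moduli exceeding `1`, capped at `2`: a
polynomial with a root of modulus `> 1` either has a root of modulus `> 2 ≥ A`, or it is one of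
the finitely many polynomials and the modulus of that root is at least `A`. -/

open Polynomial

theorem Set.Finite.exists_gt_le_forall_le_of_gt {α : Type*} [LinearOrder α] {S : Set α}
    (hS : S.Finite) {c d : α} (hcd : c < d) :
    ∃ A, c < A ∧ A ≤ d ∧ ∀ x ∈ S, c < x → A ≤ x := by
  obtain ⟨A, hAT, hAmin⟩ := Set.exists_min_image (insert d {x ∈ S | c < x}) id
    ((hS.sep _).insert d) (Set.insert_nonempty _ _)
  refine ⟨A, ?_, hAmin d (Set.mem_insert _ _), fun x hx hcx => hAmin x (.inr ⟨hx, hcx⟩)⟩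
  rcases hAT with rfl | ⟨-, hcA⟩
  exacts [hcd, hcA]

theorem pow_sub_mul_choose_le_add_one_pow {R : Type*} [CommSemiring R] [PartialOrder R]
    [IsOrderedRing R] {B : R} (hB : 0 ≤ B) (n i : ℕ) :
    B ^ (n - i) * n.choose i ≤ (B + 1) ^ n := by
  rcases le_or_gt i n with hin | hni
  · calc B ^ (n - i) * n.choose i = 1 ^ i * B ^ (n - i) * n.choose i := by rw [one_pow, one_mul]
      _ ≤ ∑ k ∈ Finset.range (n + 1), 1 ^ k * B ^ (n - k) * n.choose k :=
        Finset.single_le_sum (f := fun k => 1 ^ k * B ^ (n - k) * (n.choose k : R))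
          (fun k _ => by
            simpa using mul_nonneg (pow_nonneg hB (n - k)) (Nat.cast_nonneg (n.choose k)))
          (Finset.mem_range.2 (Nat.lt_succ_of_le hin))
      _ = (B + 1) ^ n := by rw [add_comm B 1, add_pow]
  · simp [Nat.choose_eq_zero_of_lt hni, pow_nonneg (add_nonneg hB zero_le_one)]

theorem Polynomial.Monic.abs_coeff_le_of_aroots_norm_le {P : ℤ[X]} (hP : P.Monic) {B : ℝ}
    (hB : 0 ≤ B) (hroots : ∀ z ∈ P.aroots ℂ, ‖z‖ ≤ B) (i : ℕ) :
    |(P.coeff i : ℝ)| ≤ (B + 1) ^ P.natDegree := by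
  have h := coeff_le_of_roots_le i hP (IsAlgClosed.splits _) hroots
  rw [coeff_map, eq_intCast, Complex.norm_intCast] at h
  exact h.trans (pow_sub_mul_choose_le_add_one_pow hB _ _)

theorem finite_setOf_aeval_eq_zero_of_monic_of_roots_norm_le (n : ℕ) {B : ℝ} (hB : 0 ≤ B) :
    {z : ℂ | ∃ P : ℤ[X], P.Monic ∧ P.natDegree ≤ n ∧
      (∀ w : ℂ, aeval w P = 0 → ‖w‖ ≤ B) ∧ aeval z P = 0}.Finite := by
  classical
  set N : ℤ := ⌈(B + 1) ^ n⌉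
  apply (bUnion_roots_finite (algebraMap ℤ ℂ) n (Set.finite_Icc (-N) N)).subset
  rintro z ⟨P, hP, hdeg, hroots, hz⟩
  have hmem {w : ℂ} : w ∈ P.aroots ℂ ↔ aeval w P = 0 := by
    rw [mem_aroots, and_iff_right hP.ne_zero]
  have hcoeff (i : ℕ) : |((P.coeff i : ℤ) : ℝ)| ≤ (N : ℝ) :=
    ((hP.abs_coeff_le_of_aroots_norm_le hB (fun w hw => hroots w (hmem.1 hw)) i).trans
      (pow_le_pow_right₀ (by linarith) hdeg)).trans (Int.le_ceil _)
  refine Set.mem_biUnion (x := P) ⟨hdeg, fun i => abs_le.1 (by exact_mod_cast hcoeff i)⟩ ?_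
  simpa using hmem.2 hz

theorem monic_int_poly_root_modulus_gap_general (b : ℕ) :
    ∃ A : ℝ, 1 < A ∧
      ∀ P : Polynomial ℤ, P.Monic → P.natDegree = b →
        (∃ z : ℂ, Polynomial.aeval z P = 0 ∧ 1 < ‖z‖) →
        ∃ z : ℂ, Polynomial.aeval z P = 0 ∧ A ≤ ‖z‖ := by
  obtain ⟨A, hA1, hA2, hA⟩ := ((finite_setOf_aeval_eq_zero_of_monic_of_roots_norm_le b
    zero_le_two).image (‖·‖)).exists_gt_le_forall_le_of_gt one_lt_two
  refine ⟨A, hA1, fun P hP hdeg ⟨z₀, hz₀, hz₀1⟩ => ?_⟩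
  by_cases hbig : ∃ z : ℂ, aeval z P = 0 ∧ 2 < ‖z‖
  · obtain ⟨z, hz, hz2⟩ := hbig
    exact ⟨z, hz, hA2.trans hz2.le⟩
  · push Not at hbig
    exact ⟨z₀, hz₀, hA _ ⟨z₀, ⟨P, hP, hdeg.le, hbig, hz₀⟩, rfl⟩ hz₀1⟩

theorem monic_int_poly_root_modulus_gap (b : ℕ) (hb : 0 < b) :
    ∃ A : ℝ, 1 < A ∧
      ∀ P : Polynomial ℤ, P.Monic → P.natDegree = b →
        (∃ z : ℂ, Polynomial.aeval z P = 0 ∧ 1 < ‖z‖) →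
        ∃ z : ℂ, Polynomial.aeval z P = 0 ∧ A ≤ ‖z‖ :=
  monic_int_poly_root_modulus_gap_general b
end

section
/- Let V be a finite-dimensional real vector space with a symmetric bilinear form Q of signature (dim V − 1, 1) (i.e., positive definite on a hyperplane and with a one-dimensional negative direction). Let α, β ∈ V satisfy Q(α,α) ≤ 0, Q(β,β) ≤ 0 and Q(α,β) ≤ 0. Then Q(α,α)·Q(β,β) ≤ Q(α,β)². -/
theorem reverse_cauchy_schwarz_minkowski
    {V : Type*} [AddCommGroup V] [Module ℝ V] [FiniteDimensional ℝ V]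
    (Q : LinearMap.BilinForm ℝ V) (hQsymm : ∀ u v : V, Q u v = Q v u)
    (P : Submodule ℝ V) (hP : IsCoatom P)
    (hpos : ∀ v ∈ P, v ≠ 0 → 0 < Q v v)
    (hneg : ∃ w : V, Q w w < 0)
    (α β : V) (hα : Q α α ≤ 0) (hβ : Q β β ≤ 0) (hαβ : Q α β ≤ 0) :
    Q α α * Q β β ≤ (Q α β) ^ 2 := by
  by_contra hcon
  push_neg at hcon
  have hprod : 0 < Q α α * Q β β := lt_of_le_of_lt (sq_nonneg _) hcon
  have hαneg : Q α α < 0 := by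
    rcases lt_or_eq_of_le hα with h | h
    · exact h
    · nlinarith
  have hβneg : Q β β < 0 := by nlinarith
  -- α ∉ P since Q α α < 0
  have hnotP : α ∉ P := by
    intro hmem
    have hne : α ≠ 0 := by
      intro h0; rw [h0] at hαneg; simp at hαneg
    exact absurd (hpos α hmem hne) (not_lt.mpr hαneg.le)
  -- P ⊔ span{α} = ⊤
  have htop : P ⊔ Submodule.span ℝ {α} = ⊤ := by
    apply hP.2
    refine lt_of_le_of_ne le_sup_left ?_
    intro heq
    apply hnotP
    have : α ∈ P ⊔ Submodule.span ℝ {α} :=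
      Submodule.mem_sup_right (Submodule.mem_span_singleton_self α)
    rwa [← heq] at this
  have hβmem : β ∈ P ⊔ Submodule.span ℝ {α} := htop ▸ Submodule.mem_top
  rcases Submodule.mem_sup.mp hβmem with ⟨p, hpP, z, hz, hpz⟩
  rcases Submodule.mem_span_singleton.mp hz with ⟨c, rfl⟩
  -- p = β - c • α
  have hpeq : p = β - c • α := by
    have := hpz
    linear_combination (norm := module) this
  have hQp : Q p p = Q β β - 2 * c * Q α β + c ^ 2 * Q α α := by
    rw [hpeq]
    simp only [map_sub, map_smul, LinearMap.sub_apply, LinearMap.smul_apply,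
      smul_eq_mul]
    rw [hQsymm β α]
    ring
  have hQpneg : Q p p < 0 := by
    rw [hQp]
    nlinarith [sq_nonneg (c * Q α α - Q α β)]
  have hpne : p ≠ 0 := by
    intro h0; rw [h0] at hQpneg; simp at hQpneg
  exact absurd (hpos p hpP hpne) (not_lt.mpr hQpneg.le)
end
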